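/- Suppose ẑ ∈ ℝ^N satisfies the decomposition λ ẑ_{S^c} = W_{S^c} − R_{S^c} − A (W_S − R_S) + λ A ẑ_S, where A is a matrix with ‖A‖_∞ ≤ 1 − α for some α ∈ (0,1], ‖ẑ_S‖_∞ ≤ 1, ‖W‖_∞/λ ≤ α/(4(2−α)), and ‖R‖_∞/λ ≤ α/(4(2−α)). Then ‖ẑ_{S^c}‖_∞ ≤ 1 − α/2 < 1. -/

import Mathlib

open Matrix

/-- Matrix ℓ∞ operator norm: maximum absolute row sum. -/
noncomputable def linftyNorm {l m : ℕ} (M : Matrix (Fin l) (Fin m) ℝ) : ℝ :=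
  ⨆ j, ∑ k, |M j k|

lemma rowSum_abs_le_linftyNorm {l m : ℕ} (M : Matrix (Fin l) (Fin m) ℝ) (j : Fin l) :
    ∑ k, |M j k| ≤ linftyNorm M :=
  le_ciSup (Set.finite_range fun i => ∑ k, |M i k|).bddAbove j

lemma abs_mulVec_apply_le {ι κ : Type*} [Fintype κ] (A : Matrix ι κ ℝ) {v : κ → ℝ} {c : ℝ}
    (hv : ∀ k, |v k| ≤ c) (j : ι) : |(A *ᵥ v) j| ≤ (∑ k, |A j k|) * c :=
  calc |(A *ᵥ v) j| = |∑ k, A j k * v k| := rfl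
    _ ≤ ∑ k, |A j k| * |v k| := by
        simpa only [abs_mul] using Finset.abs_sum_le_sum_abs (fun k => A j k * v k) Finset.univ
    _ ≤ ∑ k, |A j k| * c :=
        Finset.sum_le_sum fun k _ => mul_le_mul_of_nonneg_left (hv k) (abs_nonneg _)
    _ = (∑ k, |A j k|) * c := (Finset.sum_mul ..).symm

lemma abs_mul_apply_le_of_decomp {ι κ : Type*} [Fintype κ] (A : Matrix ι κ ℝ)
    (zS WS RS : κ → ℝ) (zSc WSc RSc : ι → ℝ) {lam ρ b : ℝ}
    (hdecomp : lam • zSc = WSc - RSc - A *ᵥ (WS - RS) + lam • A *ᵥ zS)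
    (hrow : ∀ j, ∑ k, |A j k| ≤ ρ) (hzS : ∀ k, |zS k| ≤ 1)
    (hWS : ∀ k, |WS k| ≤ b) (hWSc : ∀ j, |WSc j| ≤ b)
    (hRS : ∀ k, |RS k| ≤ b) (hRSc : ∀ j, |RSc j| ≤ b) (j : ι) :
    |lam * zSc j| ≤ 2 * b * (1 + ρ) + |lam| * ρ := by
  have hj : lam * zSc j = WSc j - RSc j - (A *ᵥ (WS - RS)) j + lam * (A *ᵥ zS) j := by
    simpa using congrFun hdecomp j
  have hb : 0 ≤ b := (abs_nonneg _).trans (hWSc j)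
  have hWR : ∀ k, |(WS - RS) k| ≤ 2 * b := fun k =>
    (abs_sub (WS k) (RS k)).trans (by linarith [hWS k, hRS k])
  have hAWR : |(A *ᵥ (WS - RS)) j| ≤ ρ * (2 * b) :=
    (abs_mulVec_apply_le A hWR j).trans (mul_le_mul_of_nonneg_right (hrow j) (by linarith))
  have hAz : |(A *ᵥ zS) j| ≤ ρ := by
    simpa using (abs_mulVec_apply_le A hzS j).trans (by simpa using hrow j)
  rw [hj]
  calc |WSc j - RSc j - (A *ᵥ (WS - RS)) j + lam * (A *ᵥ zS) j|
      ≤ |WSc j| + |RSc j| + |(A *ᵥ (WS - RS)) j| + |lam| * |(A *ᵥ zS) j| := by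
        rw [← abs_mul]
        linarith [abs_add_le (WSc j - RSc j - (A *ᵥ (WS - RS)) j) (lam * (A *ᵥ zS) j),
          abs_sub (WSc j - RSc j) ((A *ᵥ (WS - RS)) j), abs_sub (WSc j) (RSc j)]
    _ ≤ b + b + ρ * (2 * b) + |lam| * ρ := by
        gcongr
        exacts [hWSc j, hRSc j]
    _ = 2 * b * (1 + ρ) + |lam| * ρ := by ring

/-- strict dual feasibility: if
`λ ẑ_{Sᶜ} = W_{Sᶜ} − R_{Sᶜ} − A (W_S − R_S) + λ A ẑ_S` with `‖A‖_∞ ≤ 1 − α`,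
`‖ẑ_S‖_∞ ≤ 1`, `‖W‖_∞/λ ≤ α/(4(2−α))` and `‖R‖_∞/λ ≤ α/(4(2−α))`, then
`‖ẑ_{Sᶜ}‖_∞ ≤ 1 − α/2 < 1`.  Here the `S`- and `Sᶜ`-blocks of the vectors are
represented as vectors indexed by `Fin m` and `Fin l` respectively. -/
theorem stmt_14 {l m : ℕ} (A : Matrix (Fin l) (Fin m) ℝ)
    (zS WS RS : Fin m → ℝ) (zSc WSc RSc : Fin l → ℝ)
    (α lam : ℝ) (hα : α ∈ Set.Ioc (0 : ℝ) 1) (hlam : 0 < lam)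
    (hdecomp : lam • zSc = WSc - RSc - A.mulVec (WS - RS) + lam • A.mulVec zS)
    (hA : linftyNorm A ≤ 1 - α)
    (hzS : ∀ j, |zS j| ≤ 1)
    (hWS : ∀ j, |WS j| / lam ≤ α / (4 * (2 - α)))
    (hWSc : ∀ j, |WSc j| / lam ≤ α / (4 * (2 - α)))
    (hRS : ∀ j, |RS j| / lam ≤ α / (4 * (2 - α)))
    (hRSc : ∀ j, |RSc j| / lam ≤ α / (4 * (2 - α))) :
    (∀ j, |zSc j| ≤ 1 - α / 2) ∧ 1 - α / 2 < 1 := by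
  obtain ⟨hα0, hα1⟩ := hα
  have hnoise {x : ℝ} (h : |x| / lam ≤ α / (4 * (2 - α))) : |x| ≤ α / (4 * (2 - α)) * lam :=
    (div_le_iff₀ hlam).1 h
  refine ⟨fun j => ?_, by linarith⟩
  have key := abs_mul_apply_le_of_decomp A zS WS RS zSc WSc RSc hdecomp
    (fun j => (rowSum_abs_le_linftyNorm A j).trans hA) hzS
    (fun k => hnoise (hWS k)) (fun k => hnoise (hWSc k))
    (fun k => hnoise (hRS k)) (fun k => hnoise (hRSc k)) j
  rw [abs_mul, abs_of_pos hlam] at key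
  -- The noise constant is chosen so that the noise terms eat exactly half of the margin `α`.
  have hbudget : 2 * (α / (4 * (2 - α)) * lam) * (1 + (1 - α)) + lam * (1 - α)
      = lam * (1 - α / 2) := by
    field_simp [show (2 : ℝ) - α ≠ 0 by linarith]
    ring
  exact le_of_mul_le_mul_left (key.trans hbudget.le) hlam
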